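/- arXiv:1909.11948 — 2 statements merged into one kernel-verified Lean document; each statement's English description precedes it below -/
import Mathlib

section
/- Let X be a square-integrable random vector in ℝᵖ and Y a random variable such that E[X | BᵀX, Y] = E[X | BᵀX] almost surely (conditional independence of Y and X given BᵀX at the level of first moments), and suppose E[X | BᵀX] = Pᵀ X almost surely for a fixed matrix P with P = B(BᵀΣB)⁻¹BᵀΣ where Σ = Cov(X). Then Σ⁻¹(E[X|Y] − E[X]) = P · Σ⁻¹(E[X|Y] − E[X]) almost surely. -/
/-!
Conditioning the identity `E[X | BᵀX, Y] = Pᵀ X` further on `Y` (tower property) gives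
`E[X | Y] = Pᵀ E[X | Y]`, and conditioning it on the trivial σ-algebra gives `E[X] = Pᵀ E[X]`.
Hence `v = E[X | Y] - E[X]` is fixed by `Pᵀ`. Writing `P = M S` with `M = B (Bᵀ S B)⁻¹ Bᵀ`
symmetric, `Pᵀ = S M`, so `S⁻¹ v = S⁻¹ Pᵀ v = M v = P S⁻¹ v`.
-/

open Matrix MeasureTheory

theorem condExp_ae_eq_comp_condExp_of_le {α E : Type*} {m m₁ m₀ : MeasurableSpace α}
    {μ : Measure α} [IsFiniteMeasure μ]
    [NormedAddCommGroup E] [NormedSpace ℝ E] [CompleteSpace E]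
    (hm : m ≤ m₁) (hm₁ : m₁ ≤ m₀) {f : α → E} (hf : Integrable f μ) (T : E →L[ℝ] E)
    (h : μ[f | m₁] =ᵐ[μ] T ∘ f) : μ[f | m] =ᵐ[μ] T ∘ μ[f | m] :=
  calc μ[f | m] =ᵐ[μ] μ[μ[f | m₁] | m] := (condExp_condExp_of_le hm hm₁).symm
    _ =ᵐ[μ] μ[T ∘ f | m] := condExp_congr_ae h
    _ =ᵐ[μ] T ∘ μ[f | m] := (T.comp_condExp_comm hf).symm

theorem integral_eq_of_condExp_ae_eq_comp {α E : Type*} {m m₀ : MeasurableSpace α}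
    {μ : Measure α} [IsProbabilityMeasure μ]
    [NormedAddCommGroup E] [NormedSpace ℝ E] [CompleteSpace E]
    (hm : m ≤ m₀) {f : α → E} (hf : Integrable f μ) (T : E →L[ℝ] E)
    (h : μ[f | m] =ᵐ[μ] T ∘ f) : ∫ x, f x ∂μ = T (∫ x, f x ∂μ) := by
  have hbot := condExp_ae_eq_comp_condExp_of_le bot_le hm hf T h
  rw [condExp_bot] at hbot
  exact hbot.exists.choose_spec

namespace Matrix

theorem isSymm_mul_mul_transpose {n k α : Type*} [Fintype k] [CommRing α] {C : Matrix k k α}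
    (hC : C.IsSymm) (B : Matrix n k α) : (B * C * Bᵀ).IsSymm := by
  rw [IsSymm, transpose_mul, transpose_mul, transpose_transpose, hC.eq, Matrix.mul_assoc]

theorem inv_mulVec_eq_mulVec_inv_mulVec {n α : Type*} [Fintype n] [DecidableEq n] [CommRing α]
    {M S : Matrix n n α} (hM : M.IsSymm) (hS : S.IsSymm)
    (hSu : IsUnit S.det) {v : n → α} (hv : (M * S)ᵀ *ᵥ v = v) :
    S⁻¹ *ᵥ v = (M * S) *ᵥ (S⁻¹ *ᵥ v) := by
  conv_lhs => rw [← hv]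
  rw [transpose_mul, hM.eq, hS.eq, mulVec_mulVec, mulVec_mulVec, ← Matrix.mul_assoc,
    nonsing_inv_mul S hSu, Matrix.one_mul, Matrix.mul_assoc, mul_nonsing_inv S hSu,
    Matrix.mul_one]

end Matrix

theorem stmt5_general {Ω 𝓨 : Type*} [MeasurableSpace Ω] [MeasurableSpace 𝓨]
    {μ : Measure Ω} [IsProbabilityMeasure μ]
    {p d : ℕ} (X : Ω → Fin p → ℝ) (Y : Ω → 𝓨)
    (hXm : Measurable X) (hYm : Measurable Y)
    (hX2 : ∀ i, MemLp (fun ω => X ω i) 2 μ)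
    (S : Matrix (Fin p) (Fin p) ℝ)
    (hSpd : S.PosDef)
    (B : Matrix (Fin p) (Fin d) ℝ)
    (P : Matrix (Fin p) (Fin p) ℝ) (hP : P = B * (Bᵀ * S * B)⁻¹ * Bᵀ * S)
    (hlin : μ[X | MeasurableSpace.comap (fun ω => Bᵀ.mulVec (X ω)) inferInstance]
        =ᵐ[μ] fun ω => Pᵀ.mulVec (X ω))
    (hci : μ[X | MeasurableSpace.comap (fun ω => (Bᵀ.mulVec (X ω), Y ω)) inferInstance]
        =ᵐ[μ] μ[X | MeasurableSpace.comap (fun ω => Bᵀ.mulVec (X ω)) inferInstance]) :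
    ∀ᵐ ω ∂μ,
      S⁻¹.mulVec ((μ[X | MeasurableSpace.comap Y inferInstance]) ω
          - fun i => ∫ ω', X ω' i ∂μ)
        = P.mulVec (S⁻¹.mulVec ((μ[X | MeasurableSpace.comap Y inferInstance]) ω
          - fun i => ∫ ω', X ω' i ∂μ)) := by
  have hBXY : Measurable fun ω => (Bᵀ *ᵥ X ω, Y ω) :=
    (Bᵀ.mulVecLin.continuous_of_finiteDimensional.measurable.comp hXm).prodMk hYm
  have hY_le : MeasurableSpace.comap Y inferInstance
      ≤ MeasurableSpace.comap (fun ω => (Bᵀ *ᵥ X ω, Y ω)) inferInstance :=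
    (measurable_snd.comp (comap_measurable fun ω => (Bᵀ *ᵥ X ω, Y ω))).comap_le
  have hXint : Integrable X μ := Integrable.of_eval fun i => (hX2 i).integrable one_le_two
  let T : (Fin p → ℝ) →L[ℝ] (Fin p → ℝ) := LinearMap.toContinuousLinearMap Pᵀ.mulVecLin
  have hfix : μ[X | MeasurableSpace.comap (fun ω => (Bᵀ *ᵥ X ω, Y ω)) inferInstance]
      =ᵐ[μ] T ∘ X := hci.trans hlin
  have hmean : (fun i => ∫ ω, X ω i ∂μ) = Pᵀ *ᵥ fun i => ∫ ω, X ω i ∂μ := by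
    rw [funext fun i => (eval_integral (fun i => hXint.eval i) i).symm]
    exact integral_eq_of_condExp_ae_eq_comp hBXY.comap_le hXint T hfix
  have hS_symm : S.IsSymm :=
    (conjTranspose_eq_transpose_of_trivial S).symm.trans hSpd.isHermitian.eq
  have hBSB : (Bᵀ * S * B).IsSymm := by
    simpa only [transpose_transpose] using isSymm_mul_mul_transpose hS_symm Bᵀ
  filter_upwards [condExp_ae_eq_comp_condExp_of_le hY_le hBXY.comap_le hXint T hfix] with ω hω
  subst hP
  refine inv_mulVec_eq_mulVec_inv_mulVec (isSymm_mul_mul_transpose hBSB.inv B) hS_symm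
    ((isUnit_iff_isUnit_det S).1 hSpd.isUnit) ?_
  rw [mulVec_sub, ← hmean]
  exact congrArg (· - _) hω.symm

/-- with `Σ = Cov(X)` positive definite, `P = B (Bᵀ Σ B)⁻¹ Bᵀ Σ`,
assuming `E[X | BᵀX, Y] = E[X | BᵀX]` a.s. and `E[X | BᵀX] = Pᵀ X` a.s., one has
`Σ⁻¹ (E[X|Y] - E[X]) = P Σ⁻¹ (E[X|Y] - E[X])` almost surely. -/
theorem stmt5 {Ω 𝓨 : Type*} [MeasurableSpace Ω] [MeasurableSpace 𝓨]
    {μ : Measure Ω} [IsProbabilityMeasure μ]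
    {p d : ℕ} (X : Ω → Fin p → ℝ) (Y : Ω → 𝓨)
    (hXm : Measurable X) (hYm : Measurable Y)
    (hX2 : ∀ i, MemLp (fun ω => X ω i) 2 μ)
    (S : Matrix (Fin p) (Fin p) ℝ)
    (hS : S = Matrix.of fun i j =>
      ∫ ω, (X ω i - ∫ ω', X ω' i ∂μ) * (X ω j - ∫ ω', X ω' j ∂μ) ∂μ)
    (hSpd : S.PosDef)
    (B : Matrix (Fin p) (Fin d) ℝ) (hB : B.rank = d)
    (P : Matrix (Fin p) (Fin p) ℝ) (hP : P = B * (Bᵀ * S * B)⁻¹ * Bᵀ * S)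
    (hlin : μ[X | MeasurableSpace.comap (fun ω => Bᵀ.mulVec (X ω)) inferInstance]
        =ᵐ[μ] fun ω => Pᵀ.mulVec (X ω))
    (hci : μ[X | MeasurableSpace.comap (fun ω => (Bᵀ.mulVec (X ω), Y ω)) inferInstance]
        =ᵐ[μ] μ[X | MeasurableSpace.comap (fun ω => Bᵀ.mulVec (X ω)) inferInstance]) :
    ∀ᵐ ω ∂μ,
      S⁻¹.mulVec ((μ[X | MeasurableSpace.comap Y inferInstance]) ω
          - fun i => ∫ ω', X ω' i ∂μ)
        = P.mulVec (S⁻¹.mulVec ((μ[X | MeasurableSpace.comap Y inferInstance]) ω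
          - fun i => ∫ ω', X ω' i ∂μ)) :=
  stmt5_general X Y hXm hYm hX2 S hSpd B P hP hlin hci
end

section
/- With the notation of the previous statement, the matrix M = Σₗ Uₗ Uₗᵀ/pₗ − m mᵀ is positive semidefinite almost surely. -/
/-!
Once the positive weights `pₗ` sum to one and `m = Σₗ Uₗ`, the kernel matrix is a weighted sum
of rank-one squares, `Σₗ pₗ⁻¹ Uₗ Uₗᵀ - m mᵀ = Σₗ pₗ (Uₗ / pₗ - m)(Uₗ / pₗ - m)ᵀ`: the covariance
of the values `Uₗ / pₗ = E[X | Y = l, W]` under the weights `pₗ`. Both `Σₗ pₗ = 1` and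
`Σₗ Uₗ = m` hold almost surely because the fibres `{Y = l}` partition `Ω` and conditional
expectation is additive.
-/

open Matrix MeasureTheory

section Covariance

variable {ι n : Type*} (s : Finset ι) (w : ι → ℝ) (u : ι → n → ℝ)

theorem sum_inv_smul_vecMulVec_sub_eq_sum_smul_vecMulVec
    (hw : ∀ l ∈ s, w l ≠ 0) (hsum : ∑ l ∈ s, w l = 1) :
    ∑ l ∈ s, (w l)⁻¹ • vecMulVec (u l) (u l) - vecMulVec (∑ l ∈ s, u l) (∑ l ∈ s, u l) =
      ∑ l ∈ s, w l • vecMulVec ((w l)⁻¹ • u l - ∑ k ∈ s, u k) ((w l)⁻¹ • u l - ∑ k ∈ s, u k) := by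
  ext i j
  simp only [Matrix.sub_apply, Matrix.sum_apply, Matrix.smul_apply, vecMulVec_apply,
    Pi.sub_apply, Pi.smul_apply, Finset.sum_apply, smul_eq_mul]
  set a := ∑ k ∈ s, u k i
  set b := ∑ k ∈ s, u k j
  have hterm : ∀ l ∈ s, w l * (((w l)⁻¹ * u l i - a) * ((w l)⁻¹ * u l j - b)) =
      (w l)⁻¹ * (u l i * u l j) - (u l i * b + a * u l j) + w l * (a * b) := by
    intro l hl
    field_simp [hw l hl]
    ring
  rw [Finset.sum_congr rfl hterm, Finset.sum_add_distrib, Finset.sum_sub_distrib,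
    Finset.sum_add_distrib, ← Finset.sum_mul, ← Finset.mul_sum, ← Finset.sum_mul, hsum]
  ring

theorem posSemidef_sum_inv_smul_vecMulVec_sub [Fintype n]
    (hw : ∀ l ∈ s, 0 < w l) (hsum : ∑ l ∈ s, w l = 1) :
    (∑ l ∈ s, (w l)⁻¹ • vecMulVec (u l) (u l) -
      vecMulVec (∑ l ∈ s, u l) (∑ l ∈ s, u l)).PosSemidef := by
  rw [sum_inv_smul_vecMulVec_sub_eq_sum_smul_vecMulVec s w u (fun l hl => (hw l hl).ne') hsum]
  exact posSemidef_sum s fun l hl => (posSemidef_vecMulVec_self_star _).smul (hw l hl).le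

end Covariance

section Partition

variable {Ω ι E : Type*} {mΩ : MeasurableSpace Ω} {μ : Measure Ω}
  [NormedAddCommGroup E] [NormedSpace ℝ E] [CompleteSpace E] {s : Finset ι} {Y : Ω → ι}

theorem sum_indicator_fiber_eq_one (hY : ∀ ω, Y ω ∈ s) (ω : Ω) :
    ∑ l ∈ s, {ω' | Y ω' = l}.indicator (fun _ => (1 : ℝ)) ω = 1 := by
  classical
  simp [Set.indicator_apply, hY ω]

theorem condExp_sum_indicator_fiber_smul [MeasurableSpace ι] [MeasurableSingletonClass ι]
    (hYm : Measurable Y) (hY : ∀ ω, Y ω ∈ s) {f : Ω → E} (hf : Integrable f μ)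
    (m : MeasurableSpace Ω) :
    ∑ l ∈ s, μ[fun ω => {ω' | Y ω' = l}.indicator (fun _ => (1 : ℝ)) ω • f ω | m]
      =ᵐ[μ] μ[f | m] := by
  have hfiber : ∀ l, (fun ω => {ω' | Y ω' = l}.indicator (fun _ => (1 : ℝ)) ω • f ω) =
      {ω' | Y ω' = l}.indicator f := fun l => by
    simp_rw [← Set.indicator_smul_apply_left, one_smul]
  have hsum : ∑ l ∈ s, (fun ω => {ω' | Y ω' = l}.indicator (fun _ => (1 : ℝ)) ω • f ω) = f := by
    ext ω
    rw [Finset.sum_apply, ← Finset.sum_smul, sum_indicator_fiber_eq_one hY, one_smul]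
  refine (condExp_finsetSum (fun l _ => ?_) m).symm.trans (by rw [hsum])
  rw [hfiber]
  exact hf.indicator (hYm (measurableSet_singleton l))

end Partition

theorem stmt13_general {Ω 𝓦 : Type*} [MeasurableSpace Ω] [MeasurableSpace 𝓦]
    {μ : Measure Ω} [IsProbabilityMeasure μ]
    {p H : ℕ} (X : Ω → Fin p → ℝ) (Y : Ω → ℕ) (W : Ω → 𝓦)
    (hYm : Measurable Y) (hWm : Measurable W)
    (hXint : Integrable X μ)
    (hYrange : ∀ ω, Y ω ∈ Finset.Icc 1 H)
    (pfun : ℕ → Ω → ℝ) (U : ℕ → Ω → Fin p → ℝ) (m : Ω → Fin p → ℝ)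
    (hp : ∀ l, pfun l = μ[Set.indicator {ω' | Y ω' = l} (fun _ => (1 : ℝ))
        | MeasurableSpace.comap W inferInstance])
    (hU : ∀ l, U l = μ[fun ω' => Set.indicator {ω'' | Y ω'' = l} (fun _ => (1 : ℝ)) ω' • X ω'
        | MeasurableSpace.comap W inferInstance])
    (hm : m = μ[X | MeasurableSpace.comap W inferInstance])
    (hpos : ∀ l ∈ Finset.Icc 1 H, ∀ᵐ ω ∂μ, 0 < pfun l ω) :
    ∀ᵐ ω ∂μ,
      ((∑ l ∈ Finset.Icc 1 H, (pfun l ω)⁻¹ • vecMulVec (U l ω) (U l ω))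
          - vecMulVec (m ω) (m ω)).PosSemidef := by
  have hpsum : ∑ l ∈ Finset.Icc 1 H, pfun l =ᵐ[μ] fun _ => 1 := by
    have h := condExp_sum_indicator_fiber_smul (μ := μ) hYm hYrange (integrable_const (1 : ℝ))
      (MeasurableSpace.comap W inferInstance)
    simp only [smul_eq_mul, mul_one, condExp_const hWm.comap_le] at h
    simpa only [hp] using h
  have hUsum : ∑ l ∈ Finset.Icc 1 H, U l =ᵐ[μ] m := by
    simpa only [hU, hm] using
      condExp_sum_indicator_fiber_smul hYm hYrange hXint (MeasurableSpace.comap W inferInstance)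
  filter_upwards [hpsum, hUsum, (Finset.eventually_all _).mpr hpos] with ω hωp hωU hωpos
  rw [← hωU, Finset.sum_apply]
  exact posSemidef_sum_inv_smul_vecMulVec_sub _ _ _ hωpos (by rwa [Finset.sum_apply] at hωp)

/-- with `pₗ = E[1{Y=l} | W] > 0` a.s., `Uₗ = E[X·1{Y=l} | W]` and
`m = E[X | W]`, the kernel matrix `M = Σₗ Uₗ Uₗᵀ / pₗ - m mᵀ` is positive
semidefinite almost surely. -/
theorem stmt13 {Ω 𝓦 : Type*} [MeasurableSpace Ω] [MeasurableSpace 𝓦]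
    {μ : Measure Ω} [IsProbabilityMeasure μ]
    {p H : ℕ} (X : Ω → Fin p → ℝ) (Y : Ω → ℕ) (W : Ω → 𝓦)
    (hXm : Measurable X) (hYm : Measurable Y) (hWm : Measurable W)
    (hXint : Integrable X μ)
    (hYrange : ∀ ω, Y ω ∈ Finset.Icc 1 H)
    (pfun : ℕ → Ω → ℝ) (U : ℕ → Ω → Fin p → ℝ) (m : Ω → Fin p → ℝ)
    (hp : ∀ l, pfun l = μ[Set.indicator {ω' | Y ω' = l} (fun _ => (1 : ℝ))
        | MeasurableSpace.comap W inferInstance])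
    (hU : ∀ l, U l = μ[fun ω' => Set.indicator {ω'' | Y ω'' = l} (fun _ => (1 : ℝ)) ω' • X ω'
        | MeasurableSpace.comap W inferInstance])
    (hm : m = μ[X | MeasurableSpace.comap W inferInstance])
    (hpos : ∀ l ∈ Finset.Icc 1 H, ∀ᵐ ω ∂μ, 0 < pfun l ω) :
    ∀ᵐ ω ∂μ,
      ((∑ l ∈ Finset.Icc 1 H, (pfun l ω)⁻¹ • vecMulVec (U l ω) (U l ω))
          - vecMulVec (m ω) (m ω)).PosSemidef :=
  stmt13_general X Y W hYm hWm hXint hYrange pfun U m hp hU hm hpos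
end
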